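/- In the linearized Wenger graph L_m(q), two distinct points P and P' have a common neighboring line if and only if P − P' has the form (u, lu, lu^p, …, lu^{p^{m−1}}) for some u ∈ F_q^* and l ∈ F_q; moreover in that case the common neighbor is unique. -/
import Mathlib


/-- In the linearized Wenger graph, point `P` is adjacent to line `L` iff
`l_k + p_k = p_1^{p^{k-2}} l_1` for `2 ≤ k ≤ m+1`. -/
def lwAdj (p : ℕ) {F : Type} [Field F] {m : ℕ} (P L : Fin (m + 1) → F) : Prop :=
  ∀ k : Fin m, L k.succ + P k.succ = P 0 ^ p ^ (k : ℕ) * L 0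

/-- The linearized Wenger graph `L_m(q)` as a bipartite graph on points ⊕ lines. -/
def lwGraph (p : ℕ) (F : Type) [Field F] (m : ℕ) :
    SimpleGraph ((Fin (m + 1) → F) ⊕ (Fin (m + 1) → F)) :=
  SimpleGraph.fromRel fun v w => match v, w with
    | Sum.inl P, Sum.inr L => lwAdj p P L
    | _, _ => False

/-- Two distinct points of `L_m(q)` have a common neighboring line iff `P - P'` has the
form `(u, lu, lu^p, …, lu^{p^{m-1}})` with `u ≠ 0`; in that case the common neighbor is
unique. -/
theorem stmt11 (p e m : ℕ) [Fact p.Prime] (hm : 1 ≤ m)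
    (P P' : Fin (m + 1) → GaloisField p e) (hPP : P ≠ P') :
    ((∃ L, lwAdj p P L ∧ lwAdj p P' L) ↔
      ∃ u l : GaloisField p e, u ≠ 0 ∧ P 0 - P' 0 = u ∧
        ∀ k : Fin m, P k.succ - P' k.succ = l * u ^ p ^ (k : ℕ)) ∧
    ((∃ u l : GaloisField p e, u ≠ 0 ∧ P 0 - P' 0 = u ∧
        ∀ k : Fin m, P k.succ - P' k.succ = l * u ^ p ^ (k : ℕ)) →
      ∃! L, lwAdj p P L ∧ lwAdj p P' L) := by
  have frob : ∀ (a b : GaloisField p e) (n : ℕ),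
      (a - b) ^ p ^ n = a ^ p ^ n - b ^ p ^ n := fun a b n =>
    sub_pow_char_pow a b n
  constructor
  · constructor
    · rintro ⟨L, hPL, hP'L⟩
      refine ⟨P 0 - P' 0, L 0, ?_, rfl, ?_⟩
      · intro hu
        have h0 : P 0 = P' 0 := sub_eq_zero.mp hu
        apply hPP
        funext i
        induction i using Fin.cases with
        | zero => exact h0
        | succ k =>
          have h1 := hPL k
          have h2 := hP'L k
          rw [h0] at h1
          have := h1.trans h2.symm
          exact add_left_cancel this
      · intro k
        have h1 := hPL k
        have h2 := hP'L k
        rw [frob]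
        linear_combination h1 - h2
    · rintro ⟨u, l, hu, hu0, hl⟩
      exact ⟨Fin.cons l (fun k => P 0 ^ p ^ (k : ℕ) * l - P k.succ),
        fun k => by simp only [Fin.cons_succ, Fin.cons_zero]; ring,
        fun k => by
          simp only [Fin.cons_succ, Fin.cons_zero]
          have hP'0 : P' 0 = P 0 - u := by linear_combination -hu0
          rw [hP'0, frob]
          linear_combination -hl k⟩
  · rintro ⟨u, l, hu, hu0, hl⟩
    refine ⟨Fin.cons l (fun k => P 0 ^ p ^ (k : ℕ) * l - P k.succ),
      ⟨fun k => by simp only [Fin.cons_succ, Fin.cons_zero]; ring,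
       fun k => by
        simp only [Fin.cons_succ, Fin.cons_zero]
        have hP'0 : P' 0 = P 0 - u := by linear_combination -hu0
        rw [hP'0, frob]
        linear_combination -hl k⟩, ?_⟩
    rintro L' ⟨h1, h2⟩
    have hL0 : L' 0 = l := by
      set k0 : Fin m := ⟨0, hm⟩
      have ha := h1 k0
      have hb := h2 k0
      have hc := hl k0
      have hk0 : (k0 : ℕ) = 0 := rfl
      rw [hk0] at ha hb hc
      simp only [pow_zero, pow_one] at ha hb hc
      have : u * L' 0 = u * l := by linear_combination hb - ha + hc - L' 0 * hu0
      exact mul_left_cancel₀ hu this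
    funext i
    induction i using Fin.cases with
    | zero => simpa [Fin.cons_zero] using hL0
    | succ k =>
      have ha := h1 k
      rw [hL0] at ha
      simp only [Fin.cons_succ]
      linear_combination ha
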